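/- arXiv:2009.07134 — 6 statements merged into one kernel-verified Lean document; each statement's English description precedes it below -/
import Mathlib

section
/- For every s ∈ ℂ with -1 < Re s < 0, ∫_0^∞ sin(x) x^{-s-1} dx = -sin(πs/2) Γ(-s). -/
/-!
Write `σ = 1 + s`, so that `0 < Re σ < 1`. Fubini and `∫₀^∞ t^(σ-1) e^(-xt) dt = Γ(σ) x^(-σ)`
show that the Mellin transform at `σ` of the Laplace transform of `f` is `Γ(σ)` times the Mellin
transform of `f` at `1 - σ = -s`. For `f = sin` cut off at `T` the Laplace transform is explicit
and converges, dominatedly in `T`, to `1 / (1 + t²)`, the Laplace transform of `sin`. The Mellin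
transform of `1 / (1 + t²)` is `π / (2 sin (πσ/2))`: after `u = t²` it is that of
`1 / (1 + u)`, the Laplace transform of `e^(-x)`, hence `Γ(σ/2) Γ(1 - σ/2)`. The reflection
formula turns `π / (2 sin (πσ/2)) / Γ(1 + s)` into `-sin(πs/2) Γ(-s)`.
-/

open Complex Filter

open Set MeasureTheory

open scoped Real Topology

lemma continuousOn_ofReal_cpow_const_Ioi (a : ℂ) :
    ContinuousOn (fun t : ℝ => (t : ℂ) ^ a) (Ioi 0) := fun _ ht =>
  (continuousAt_ofReal_cpow_const _ _ (Or.inr (ne_of_gt ht))).continuousWithinAt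

lemma integrableOn_cpow_mul_exp_neg_mul_Ioi {a : ℂ} {r : ℝ} (ha : 0 < a.re) (hr : 0 < r) :
    IntegrableOn (fun t : ℝ => (t : ℂ) ^ (a - 1) * cexp (-(r * t))) (Ioi 0) := by
  -- a non-integrable function has integral `0`, while this integral is `(1 / r) ^ a * Γ(a)`
  refine Integrable.of_integral_ne_zero ?_
  rw [integral_cpow_mul_exp_neg_mul_Ioi ha hr]
  exact mul_ne_zero (by simp [cpow_eq_zero_iff, hr.ne']) (Gamma_ne_zero_of_re_pos ha)

section Laplace

variable {E : Type*} [NormedAddCommGroup E] [NormedSpace ℂ E]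

noncomputable def laplace (f : ℝ → E) (t : ℝ) : E :=
  ∫ x in Ioi (0 : ℝ), cexp (-(t * x)) • f x

lemma MellinConvergent.aestronglyMeasurable {f : ℝ → E} {s : ℂ} (hf : MellinConvergent f s) :
    AEStronglyMeasurable f (volume.restrict (Ioi 0)) := by
  refine (((continuousOn_ofReal_cpow_const_Ioi (1 - s)).aestronglyMeasurable
    measurableSet_Ioi).smul (Integrable.aestronglyMeasurable hf)).congr ?_
  filter_upwards [ae_restrict_mem measurableSet_Ioi] with t ht
  simp [smul_smul, ← cpow_add _ _ (ofReal_ne_zero.2 (ne_of_gt ht))]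

lemma hasMellin_congr {f g : ℝ → E} {s : ℂ} {m : E} (hfg : EqOn f g (Ioi 0)) :
    HasMellin f s m ↔ HasMellin g s m := by
  have hsmul : EqOn (fun t : ℝ => (t : ℂ) ^ (s - 1) • f t) (fun t => (t : ℂ) ^ (s - 1) • g t)
      (Ioi 0) := fun t ht => by simp only [hfg ht]
  rw [HasMellin, HasMellin, MellinConvergent, MellinConvergent, mellin, mellin,
    integrableOn_congr_fun hsmul measurableSet_Ioi, setIntegral_congr_fun measurableSet_Ioi hsmul]

lemma setIntegral_Ioi_smul_indicator_Ioc (g : ℝ → ℂ) (f : ℝ → E) {T : ℝ} (hT : 0 ≤ T) :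
    ∫ x in Ioi 0, g x • (Ioc 0 T).indicator f x = ∫ x in (0)..T, g x • f x := by
  simp_rw [← indicator_smul_apply]
  rw [setIntegral_indicator measurableSet_Ioc, inter_eq_right.mpr Ioc_subset_Ioi_self,
    intervalIntegral.integral_of_le hT]

variable [CompleteSpace E]

theorem hasMellin_laplace {f : ℝ → E} {s : ℂ} (hs : 0 < s.re) (hf : MellinConvergent f (1 - s)) :
    HasMellin (laplace f) s (Gamma s • mellin f (1 - s)) := by
  set F : ℝ × ℝ → E := fun p => ((p.1 : ℂ) ^ (s - 1) * cexp (-(p.2 * p.1))) • f p.2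
  have hF_meas :
      AEStronglyMeasurable F ((volume.restrict (Ioi 0)).prod (volume.restrict (Ioi 0))) := by
    refine AEStronglyMeasurable.smul ?_ hf.aestronglyMeasurable.comp_snd
    rw [Measure.prod_restrict]
    refine ContinuousOn.aestronglyMeasurable ?_ (measurableSet_Ioi.prod measurableSet_Ioi)
    exact ((continuousOn_ofReal_cpow_const_Ioi _).comp continuous_fst.continuousOn
      (fun p hp => hp.1)).mul (by fun_prop)
  have hF_norm_slice : ∀ x ∈ Ioi (0 : ℝ),
      ∫ t in Ioi 0, ‖F (t, x)‖ = Real.Gamma s.re * (x ^ ((1 - s).re - 1) * ‖f x‖) := by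
    intro x hx
    calc ∫ t in Ioi 0, ‖F (t, x)‖
        = ∫ t in Ioi 0, t ^ (s.re - 1) * Real.exp (-(x * t)) * ‖f x‖ := by
          refine setIntegral_congr_fun measurableSet_Ioi fun t ht => ?_
          simp [F, norm_smul, norm_cpow_eq_rpow_re_of_pos ht, Complex.norm_exp]
      _ = Real.Gamma s.re * (x ^ ((1 - s).re - 1) * ‖f x‖) := by
          rw [integral_mul_const, Real.integral_rpow_mul_exp_neg_mul_Ioi hs hx, one_div,
            Real.inv_rpow (le_of_lt hx), ← Real.rpow_neg (le_of_lt hx)]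
          simp only [sub_re, one_re, sub_sub_cancel_left]
          ring
  have hF : Integrable F ((volume.restrict (Ioi 0)).prod (volume.restrict (Ioi 0))) := by
    rw [integrable_prod_iff' hF_meas]
    refine ⟨?_, ?_⟩
    · filter_upwards [ae_restrict_mem measurableSet_Ioi] with x hx
      exact (integrableOn_cpow_mul_exp_neg_mul_Ioi hs hx).smul_const (f x)
    · refine Integrable.congr ?_ ((ae_restrict_mem measurableSet_Ioi).mono fun x hx =>
        (hF_norm_slice x hx).symm)
      exact ((mellin_convergent_iff_norm subset_rfl measurableSet_Ioi
        hf.aestronglyMeasurable).mp hf).const_mul _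
  have hlaplace : ∀ t : ℝ, (t : ℂ) ^ (s - 1) • laplace f t = ∫ x in Ioi 0, F (t, x) := by
    intro t
    simp only [laplace, F, ← integral_smul, smul_smul, mul_comm (t : ℂ)]
  have hslice : ∀ x ∈ Ioi (0 : ℝ),
      ∫ t in Ioi 0, F (t, x) = ((x : ℂ) ^ ((1 - s) - 1) * Gamma s) • f x := by
    intro x hx
    simp only [F]
    rw [integral_smul_const, integral_cpow_mul_exp_neg_mul_Ioi hs hx, one_div,
      inv_cpow _ _ (by simp [arg_ofReal_of_nonneg (le_of_lt hx), Real.pi_ne_zero.symm]),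
      ← cpow_neg]
    ring_nf
  refine ⟨hF.integral_prod_left.congr (Eventually.of_forall fun t => (hlaplace t).symm), ?_⟩
  calc mellin (laplace f) s = ∫ t in Ioi 0, ∫ x in Ioi 0, F (t, x) := by
        simp only [mellin, hlaplace]
    _ = ∫ x in Ioi 0, ∫ t in Ioi 0, F (t, x) := integral_integral_swap hF
    _ = Gamma s • mellin f (1 - s) := by
        rw [mellin, ← integral_smul]
        refine setIntegral_congr_fun measurableSet_Ioi fun x hx => ?_
        rw [hslice x hx, smul_smul, mul_comm]

end Laplace

lemma laplace_exp_neg {u : ℝ} (hu : -1 < u) :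
    laplace (fun x : ℝ => (Real.exp (-x) : ℂ)) u = (1 + (u : ℂ))⁻¹ := by
  have hre : (-(1 + u : ℂ)).re < 0 := by
    rw [neg_re, add_re, one_re, ofReal_re]; linarith
  calc laplace (fun x : ℝ => (Real.exp (-x) : ℂ)) u
      = ∫ x in Ioi (0 : ℝ), cexp (-(1 + u : ℂ) * x) := by
        refine setIntegral_congr_fun measurableSet_Ioi fun x _ => ?_
        simp only [smul_eq_mul, ofReal_exp, ofReal_neg, ← Complex.exp_add]
        ring_nf
    _ = (1 + (u : ℂ))⁻¹ := by
        rw [integral_exp_mul_complex_Ioi hre, ofReal_zero, mul_zero, Complex.exp_zero,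
          neg_div_neg_eq, one_div]

theorem hasMellin_inv_one_add {σ : ℂ} (h0 : 0 < σ.re) (h1 : σ.re < 1) :
    HasMellin (fun u : ℝ => (1 + (u : ℂ))⁻¹) σ (π / sin (π * σ)) := by
  have hre : 0 < (1 - σ).re := by simpa using h1
  have hexp : HasMellin (fun x : ℝ => (Real.exp (-x) : ℂ)) (1 - σ) (Gamma (1 - σ)) := by
    refine ⟨?_, by rw [Gamma_eq_integral hre, GammaIntegral_eq_mellin]⟩
    simpa only [MellinConvergent, smul_eq_mul, mul_comm] using GammaIntegral_convergent hre
  have h := hasMellin_laplace h0 hexp.1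
  rw [hexp.2, smul_eq_mul, Gamma_mul_Gamma_one_sub] at h
  exact (hasMellin_congr fun u hu => laplace_exp_neg (by linarith [mem_Ioi.mp hu])).mp h

theorem mellin_inv_one_add_sq {σ : ℂ} (h0 : 0 < σ.re) (h1 : σ.re < 2) :
    mellin (fun t : ℝ => (1 + (t : ℂ) ^ 2)⁻¹) σ = π / (2 * sin (π * σ / 2)) := by
  calc mellin (fun t : ℝ => (1 + (t : ℂ) ^ 2)⁻¹) σ
      = mellin (fun t : ℝ => (fun u : ℝ => (1 + (u : ℂ))⁻¹) (t ^ (2 : ℝ))) σ := by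
        simp only [Real.rpow_two, ofReal_pow]
    _ = π / (2 * sin (π * σ / 2)) := by
        have h0' : 0 < (σ / (2 : ℝ)).re := by simpa using h0
        have h1' : (σ / (2 : ℝ)).re < 1 := by simp only [ofReal_ofNat, div_ofNat_re]; linarith
        rw [mellin_comp_rpow (fun u : ℝ => (1 + (u : ℂ))⁻¹), (hasMellin_inv_one_add h0' h1').2]
        simp only [Nat.abs_ofNat, ofReal_ofNat, real_smul, ofReal_inv]
        ring_nf

lemma integral_exp_neg_mul_mul_sin (t T : ℝ) :
    ∫ x in (0)..T, Real.exp (-(t * x)) * Real.sin x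
      = (1 - Real.exp (-(t * T)) * (Real.cos T + t * Real.sin T)) / (1 + t ^ 2) := by
  have ht : 1 + t ^ 2 ≠ 0 := by positivity
  have hderiv : ∀ x, HasDerivAt
      (fun x => -(Real.exp (-(t * x)) * (Real.cos x + t * Real.sin x)) / (1 + t ^ 2))
      (Real.exp (-(t * x)) * Real.sin x) x := by
    intro x
    have hexp : HasDerivAt (fun x => Real.exp (-(t * x))) (Real.exp (-(t * x)) * -t) x := by
      simpa using ((hasDerivAt_id x).const_mul t).neg.exp
    have htrig : HasDerivAt (fun x => Real.cos x + t * Real.sin x)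
        (-Real.sin x + t * Real.cos x) x :=
      (Real.hasDerivAt_cos x).add ((Real.hasDerivAt_sin x).const_mul t)
    refine ((hexp.mul htrig).neg.div_const (1 + t ^ 2)).congr_deriv ?_
    field_simp
    ring
  rw [intervalIntegral.integral_eq_sub_of_hasDerivAt (fun x _ => hderiv x)
    (by apply Continuous.intervalIntegrable; fun_prop)]
  simp only [mul_zero, neg_zero, Real.exp_zero, Real.cos_zero, Real.sin_zero, add_zero, mul_one]
  ring

lemma laplace_indicator_Ioc_sin {T : ℝ} (hT : 0 ≤ T) (t : ℝ) :
    laplace ((Ioc 0 T).indicator fun x => (Real.sin x : ℂ)) t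
      = ((1 - Real.exp (-(t * T)) * (Real.cos T + t * Real.sin T)) / (1 + t ^ 2) : ℝ) := by
  rw [laplace, setIntegral_Ioi_smul_indicator_Ioc _ _ hT, ← integral_exp_neg_mul_mul_sin,
    ← intervalIntegral.integral_ofReal]
  simp

lemma mellinConvergent_indicator_Ioc_sin (T : ℝ) {s : ℂ} (hs : -1 < s.re) :
    MellinConvergent ((Ioc 0 T).indicator fun x => (Real.sin x : ℂ)) s := by
  have hpow : IntegrableOn (fun x : ℝ => x ^ s.re) (Ioc 0 T) :=
    (intervalIntegral.intervalIntegrable_rpow' hs).1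
  have hmeas : AEStronglyMeasurable (fun x : ℝ => (x : ℂ) ^ (s - 1) • (Real.sin x : ℂ))
      (volume.restrict (Ioc 0 T)) :=
    ((continuousOn_ofReal_cpow_const_Ioi _).mono Ioc_subset_Ioi_self).smul
      (by fun_prop : Continuous fun x : ℝ => (Real.sin x : ℂ)).continuousOn
      |>.aestronglyMeasurable measurableSet_Ioc
  have hsin : IntegrableOn (fun x : ℝ => (x : ℂ) ^ (s - 1) • (Real.sin x : ℂ)) (Ioc 0 T) := by
    refine hpow.mono' hmeas ?_
    filter_upwards [ae_restrict_mem measurableSet_Ioc] with x hx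
    have hx0 : 0 < x := hx.1
    rw [norm_smul, norm_cpow_eq_rpow_re_of_pos hx0, norm_real, Real.norm_eq_abs]
    calc x ^ ((s - 1).re) * |Real.sin x| ≤ x ^ ((s - 1).re) * x := by
          gcongr
          simpa only [abs_of_pos hx0] using Real.abs_sin_le_abs (x := x)
      _ = x ^ s.re := by
          rw [sub_re, one_re, Real.rpow_sub_one hx0.ne', div_mul_cancel₀ _ hx0.ne']
  exact (hsin.integrable_indicator measurableSet_Ioc).integrableOn.congr_fun
    (fun x _ => indicator_smul_apply _ _ _ x) measurableSet_Ioi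

lemma abs_cos_add_mul_sin_le (T : ℝ) {t : ℝ} (ht : 0 ≤ t) :
    |Real.cos T + t * Real.sin T| ≤ 1 + t := by
  calc |Real.cos T + t * Real.sin T| ≤ |Real.cos T| + t * |Real.sin T| := by
        simpa [abs_mul, abs_of_nonneg ht] using abs_add_le (Real.cos T) (t * Real.sin T)
    _ ≤ 1 + t := by
        gcongr
        · exact Real.abs_cos_le_one T
        · exact mul_le_of_le_one_right ht (Real.abs_sin_le_one T)

lemma abs_one_sub_exp_neg_mul_div_le {t T : ℝ} (ht : 0 ≤ t) (hT : 0 ≤ T) :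
    |(1 - Real.exp (-(t * T)) * (Real.cos T + t * Real.sin T)) / (1 + t ^ 2)| ≤ 4 / (1 + t) := by
  have hexp : Real.exp (-(t * T)) ≤ 1 := Real.exp_le_one_iff.mpr (by nlinarith)
  have hnum : |1 - Real.exp (-(t * T)) * (Real.cos T + t * Real.sin T)| ≤ 2 + t := by
    calc |1 - Real.exp (-(t * T)) * (Real.cos T + t * Real.sin T)|
        ≤ 1 + Real.exp (-(t * T)) * |Real.cos T + t * Real.sin T| := by
          simpa [abs_mul, abs_of_pos (Real.exp_pos _)] using
            abs_sub (1 : ℝ) (Real.exp (-(t * T)) * (Real.cos T + t * Real.sin T))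
      _ ≤ 1 + 1 * (1 + t) := by
          gcongr
          exact abs_cos_add_mul_sin_le T ht
      _ = 2 + t := by ring
  rw [abs_div, abs_of_pos (by positivity : (0 : ℝ) < 1 + t ^ 2),
    div_le_div_iff₀ (by positivity) (by positivity)]
  nlinarith [mul_le_mul_of_nonneg_right hnum (by positivity : (0 : ℝ) ≤ 1 + t)]

lemma tendsto_exp_neg_mul_mul_cos_add_mul_sin {t : ℝ} (ht : 0 < t) :
    Tendsto (fun T => Real.exp (-(t * T)) * (Real.cos T + t * Real.sin T)) atTop (𝓝 0) := by
  refine Tendsto.zero_mul_isBoundedUnder_le ?_ ?_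
  · exact Real.tendsto_exp_neg_atTop_nhds_zero.comp (tendsto_id.const_mul_atTop ht)
  · exact isBoundedUnder_of ⟨1 + t, fun T => abs_cos_add_mul_sin_le T ht.le⟩

theorem tendsto_mellin_laplace_indicator_Ioc_sin {σ : ℂ} (h0 : 0 < σ.re) (h1 : σ.re < 1) :
    Tendsto (fun T : ℝ => mellin (laplace ((Ioc 0 T).indicator fun x => (Real.sin x : ℂ))) σ)
      atTop (𝓝 (mellin (fun t : ℝ => (1 + (t : ℂ) ^ 2)⁻¹) σ)) := by
  set q : ℝ → ℝ → ℝ :=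
    fun T t => (1 - Real.exp (-(t * T)) * (Real.cos T + t * Real.sin T)) / (1 + t ^ 2)
  have hq_cont (T : ℝ) : Continuous (q T) :=
    Continuous.div (by fun_prop) (by fun_prop) fun t => by positivity
  have hbound : IntegrableOn (fun t : ℝ => 4 * (t ^ (σ.re - 1) * ‖(1 + (t : ℂ))⁻¹‖)) (Ioi 0) :=
    ((mellin_convergent_iff_norm subset_rfl measurableSet_Ioi
      (hasMellin_inv_one_add h0 h1).1.aestronglyMeasurable).mp
      (hasMellin_inv_one_add h0 h1).1).const_mul 4
  refine (tendsto_integral_filter_of_dominated_convergence _ ?_ ?_ hbound ?_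
    (F := fun T (t : ℝ) => (t : ℂ) ^ (σ - 1) • (q T t : ℂ))).congr' ?_
  · exact Eventually.of_forall fun T => ((continuousOn_ofReal_cpow_const_Ioi _).smul
      (continuous_ofReal.comp (hq_cont T)).continuousOn).aestronglyMeasurable measurableSet_Ioi
  · filter_upwards [eventually_ge_atTop 0] with T hT
    filter_upwards [ae_restrict_mem measurableSet_Ioi] with t ht
    have ht : (0 : ℝ) < t := ht
    have hnorm : ‖(1 + (t : ℂ))⁻¹‖ = 1 / (1 + t) := by
      rw [norm_inv, one_div, ← ofReal_one, ← ofReal_add, norm_real, Real.norm_eq_abs,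
        abs_of_pos (by linarith)]
    rw [norm_smul, norm_cpow_eq_rpow_re_of_pos ht, norm_real, Real.norm_eq_abs, hnorm, sub_re,
      one_re, mul_one_div, mul_div_assoc', mul_comm 4, mul_div_assoc]
    exact mul_le_mul_of_nonneg_left (abs_one_sub_exp_neg_mul_div_le ht.le hT) (by positivity)
  · filter_upwards [ae_restrict_mem measurableSet_Ioi] with t ht
    have hlim : Tendsto (fun T => q T t) atTop (𝓝 ((1 - 0) / (1 + t ^ 2))) :=
      (tendsto_const_nhds.sub (tendsto_exp_neg_mul_mul_cos_add_mul_sin ht)).div_const _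
    rw [sub_zero, one_div] at hlim
    refine Tendsto.const_smul ?_ _
    exact_mod_cast (continuous_ofReal.tendsto _).comp hlim
  · filter_upwards [eventually_ge_atTop 0] with T hT
    simp only [mellin, laplace_indicator_Ioc_sin hT, q]

lemma Gamma_one_add_mul_neg_sin_mul_Gamma_neg {s : ℂ} (hs : ∀ n : ℤ, s ≠ n) :
    Gamma (1 + s) * (-sin (π * s / 2) * Gamma (-s)) = π / (2 * sin (π * (1 + s) / 2)) := by
  have hsin : sin (π * s / 2) ≠ 0 := by
    rw [Ne, sin_eq_zero_iff]
    rintro ⟨k, hk⟩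
    exact hs (2 * k) (by push_cast; field_simp at hk; linear_combination hk)
  have hcos : cos (π * s / 2) ≠ 0 := by
    rw [Ne, cos_eq_zero_iff]
    rintro ⟨k, hk⟩
    exact hs (2 * k + 1) (by push_cast; field_simp at hk; linear_combination hk)
  have hreflect : Gamma (-s) * Gamma (1 + s) = -(π / (2 * sin (π * s / 2) * cos (π * s / 2))) := by
    rw [← sub_neg_eq_add, Gamma_mul_Gamma_one_sub, mul_neg, Complex.sin_neg, ← sin_two_mul,
      div_neg]
    ring_nf
  rw [show π * (1 + s) / 2 = π * s / 2 + π / 2 by ring, sin_add_pi_div_two,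
    mul_comm (Gamma (1 + s)), mul_assoc, hreflect]
  field_simp

/-- For `-1 < Re s < 0`, `∫_0^∞ sin(x) x^{-s-1} dx = -sin(πs/2) Γ(-s)`
as an improper Riemann integral. -/
theorem integral_sin_mul_cpow (s : ℂ) (h1 : -1 < s.re) (h2 : s.re < 0) :
    Tendsto (fun T : ℝ =>
        ∫ x in (0 : ℝ)..T, ((Real.sin x : ℝ) : ℂ) * (x : ℂ) ^ (-s - 1))
      atTop
      (nhds (-Complex.sin ((Real.pi : ℂ) * s / 2) * Complex.Gamma (-s))) := by
  have hσ0 : 0 < (1 + s).re := by rw [add_re, one_re]; linarith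
  have hσ1 : (1 + s).re < 1 := by rw [add_re, one_re]; linarith
  have hs : ∀ n : ℤ, s ≠ n := by
    rintro n rfl
    have : (-1 : ℝ) < n ∧ (n : ℝ) < 0 := by simpa using And.intro h1 h2
    norm_cast at this
    omega
  have hGamma : Gamma (1 + s) ≠ 0 := Gamma_ne_zero_of_re_pos hσ0
  have hlim := tendsto_mellin_laplace_indicator_Ioc_sin hσ0 hσ1
  rw [mellin_inv_one_add_sq hσ0 (by linarith), ← Gamma_one_add_mul_neg_sin_mul_Gamma_neg hs,
    ← smul_eq_mul] at hlim
  refine (tendsto_const_smul_iff₀ hGamma).mp (hlim.congr' ?_)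
  filter_upwards [eventually_ge_atTop 0] with T hT
  have hconv := mellinConvergent_indicator_Ioc_sin T (s := 1 - (1 + s))
    (by simpa using h2.trans one_pos)
  rw [(hasMellin_laplace hσ0 hconv).2, mellin, setIntegral_Ioi_smul_indicator_Ioc _ _ hT]
  simp only [smul_eq_mul, mul_comm (Real.sin _ : ℂ)]
  ring_nf
end

section
/- Let s ∈ ℂ with Re s < 0, let α > 0 and d > 0. Then ∫_0^d sin(αx) x^{-s-1} dx = (α d^{1-s}/(1-s)) · ∑_{n=0}^∞ (((1-s)/2)_n / ((3/2)_n · (1 + (1-s)/2)_n)) · (-α²d²/4)^n / n!, where (z)_n = Γ(z+n)/Γ(z) is the Pochhammer symbol. -/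
/-!
Expanding `sin (α x) = ∑ (-1)ⁿ (α x)^(2n+1) / (2n+1)!` and integrating termwise against
`x^(-s-1)` (legitimate since `Re (-s-1) > -1` and `∑ (|α| d)^(2n+1) / (2n+1)! = sinh (|α| d)`)
gives `∑ (-1)ⁿ α^(2n+1) d^(2n+1-s) / ((2n+1)! (2n+1-s))`. This is the `₁F₂` series because,
with `z = (1-s)/2`, `(z)ₙ / (z+1)ₙ = z / (z+n) = (1-s) / (2n+1-s)` and `4ⁿ n! (3/2)ₙ = (2n+1)!`.
-/

/-- Pochhammer symbol `(z)_n = Γ(z+n)/Γ(z)`. -/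
noncomputable def poch (z : ℂ) (n : ℕ) : ℂ := Complex.Gamma (z + n) / Complex.Gamma z

open Polynomial Nat MeasureTheory Set

theorem poch_eq_ascPochhammer_eval {z : ℂ} (hz : ∀ k : ℕ, z ≠ -k) (n : ℕ) :
    poch z n = (ascPochhammer ℂ n).eval z :=
  Complex.Gamma_add_nat_div_Gamma_eq z hz

theorem ne_neg_natCast_of_re_pos {z : ℂ} (hz : 0 < z.re) (k : ℕ) : z ≠ -k := by
  rintro rfl
  simp only [Complex.neg_re, Complex.natCast_re, Left.neg_pos_iff] at hz
  exact k.cast_nonneg.not_gt hz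

theorem ascPochhammer_eval_ne_zero_of_re_pos {z : ℂ} (hz : 0 < z.re) (n : ℕ) :
    (ascPochhammer ℂ n).eval z ≠ 0 := fun h ↦ by
  obtain ⟨k, -, hk⟩ := (ascPochhammer_eval_eq_zero_iff n z).1 h
  exact ne_neg_natCast_of_re_pos hz k (by rw [hk, neg_neg])

theorem ascPochhammer_eval_mul_add_eq_mul_eval_add_one {R : Type*} [CommSemiring R] (n : ℕ)
    (r : R) : (ascPochhammer R n).eval r * (r + n) = r * (ascPochhammer R n).eval (r + 1) := by
  rw [← ascPochhammer_succ_eval, ascPochhammer_succ_left, eval_mul, eval_X, eval_comp, eval_add,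
    eval_X, eval_one]

theorem four_pow_mul_factorial_mul_ascPochhammer_eval_three_halves {K : Type*} [Field K]
    [CharZero K] (n : ℕ) : 4 ^ n * n ! * (ascPochhammer K n).eval (3 / 2) = (2 * n + 1)! := by
  induction n with
  | zero => simp
  | succ n ih =>
    rw [ascPochhammer_succ_eval, show 2 * (n + 1) + 1 = 2 * n + 1 + 1 + 1 by ring,
      factorial_succ, factorial_succ, factorial_succ]
    push_cast
    rw [← ih]
    ring

theorem hasSum_integral_mul_cpow_of_hasSum_pow {a : ℕ → ℂ} {m : ℕ → ℕ} {f : ℝ → ℂ} {t : ℂ}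
    {d : ℝ} (hd : 0 < d) (ht : -1 < t.re)
    (hf : ∀ x ∈ Ioc 0 d, HasSum (fun n ↦ a n * (x : ℂ) ^ m n) (f x))
    (ha : Summable fun n ↦ ‖a n‖ * d ^ m n) :
    HasSum (fun n ↦ a n * ((d : ℂ) ^ (m n + t + 1) / (m n + t + 1)))
      (∫ x in 0..d, f x * (x : ℂ) ^ t) := by
  set F : ℕ → ℝ → ℂ := fun n x ↦ a n * (x : ℂ) ^ m n * (x : ℂ) ^ t
  have hre (n : ℕ) : -1 < ((m n : ℂ) + t).re := by
    simp only [Complex.add_re, Complex.natCast_re]; linarith [(m n).cast_nonneg (α := ℝ)]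
  have hF_cpow (n : ℕ) : EqOn (F n) (fun x ↦ a n * (x : ℂ) ^ ((m n : ℂ) + t)) (Ioc 0 d) :=
    fun x hx ↦ by
      simp only [F]
      rw [mul_assoc, Complex.cpow_add _ _ (by exact_mod_cast hx.1.ne'), Complex.cpow_natCast]
  have hF_int (n : ℕ) : IntegrableOn (F n) (Ioc 0 d) :=
    (((intervalIntegral.intervalIntegrable_cpow' (hre n)).const_mul (a n)).1).congr_fun
      (hF_cpow n).symm measurableSet_Ioc
  have hF_integral (n : ℕ) :
      ∫ x in Ioc 0 d, F n x = a n * ((d : ℂ) ^ (m n + t + 1) / (m n + t + 1)) := by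
    have hne : (m n : ℂ) + t + 1 ≠ 0 := fun h ↦ by
      have := congrArg Complex.re h
      simp only [Complex.add_re, Complex.one_re, Complex.zero_re] at this
      linarith [hre n, Complex.add_re (m n : ℂ) t]
    rw [setIntegral_congr_fun measurableSet_Ioc (hF_cpow n), integral_const_mul,
      ← intervalIntegral.integral_of_le hd.le, integral_cpow (Or.inl (hre n)),
      Complex.ofReal_zero, Complex.zero_cpow hne, sub_zero]
  have hF_norm (n : ℕ) :
      ∫ x in Ioc 0 d, ‖F n x‖ ≤ ‖a n‖ * d ^ m n * ∫ x in Ioc 0 d, x ^ t.re := by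
    rw [← integral_const_mul]
    refine setIntegral_mono_on (hF_int n).norm
      ((intervalIntegral.intervalIntegrable_rpow' ht).1.const_mul _) measurableSet_Ioc
      fun x hx ↦ ?_
    rw [norm_mul, norm_mul, norm_pow, Complex.norm_real, Real.norm_of_nonneg hx.1.le,
      Complex.norm_cpow_eq_rpow_re_of_pos hx.1]
    exact mul_le_mul_of_nonneg_right
      (mul_le_mul_of_nonneg_left (pow_le_pow_left₀ hx.1.le hx.2 _) (norm_nonneg _))
      (Real.rpow_nonneg hx.1.le _)
  have hF_sum : Summable fun n ↦ ∫ x in Ioc 0 d, ‖F n x‖ :=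
    .of_nonneg_of_le (fun n ↦ integral_nonneg fun x ↦ norm_nonneg _) hF_norm (ha.mul_right _)
  rw [intervalIntegral.integral_of_le hd.le, setIntegral_congr_fun measurableSet_Ioc
    fun x hx ↦ ((hf x hx).mul_right _).tsum_eq.symm]
  simpa only [hF_integral] using hasSum_integral_of_summable_integral_norm hF_int hF_sum

theorem sin_coeff_mul_cpow_eq_oneF2_term {s : ℂ} (hs : s.re < 1) (c : ℂ) {D : ℂ} (hD : D ≠ 0)
    (n : ℕ) :
    (-1) ^ n * c ^ (2 * n + 1) / (2 * n + 1)! * (D ^ (2 * n + 1 - s) / (2 * n + 1 - s)) =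
      c * D ^ (1 - s) / (1 - s) *
        (poch ((1 - s) / 2) n / (poch (3 / 2) n * poch (1 + (1 - s) / 2) n) *
          (-c ^ 2 * D ^ 2 / 4) ^ n / n !) := by
  set w := (1 - s) / 2 with hw
  have hw_re : 0 < w.re := by simpa [hw] using hs
  have hw1_re : 0 < (w + 1).re := by
    simp only [Complex.add_re, Complex.one_re]; linarith
  rw [poch_eq_ascPochhammer_eval (ne_neg_natCast_of_re_pos hw_re),
    poch_eq_ascPochhammer_eval (ne_neg_natCast_of_re_pos (by norm_num)), add_comm 1 w,
    poch_eq_ascPochhammer_eval (ne_neg_natCast_of_re_pos hw1_re)]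
  have hshift := ascPochhammer_eval_mul_add_eq_mul_eval_add_one n w
  have hhalf := four_pow_mul_factorial_mul_ascPochhammer_eval_three_halves (K := ℂ) n
  have hpow : D ^ (2 * n + 1 - s) = D ^ (1 - s) * (D ^ 2) ^ n := by
    rw [← pow_mul, ← Complex.cpow_natCast, ← Complex.cpow_add _ _ hD]
    push_cast; ring_nf
  have h1s : 1 - s ≠ 0 := fun h ↦ by
    rw [← sub_eq_zero.1 h, Complex.one_re] at hs
    exact hs.false
  have hwn : w + n ≠ 0 := fun h ↦ ne_neg_natCast_of_re_pos hw_re n (add_eq_zero_iff_eq_neg.1 h)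
  have h2ns : (2 * n + 1 - s : ℂ) ≠ 0 := by
    rw [show (2 * n + 1 - s : ℂ) = 2 * (w + n) by rw [hw]; ring]
    exact mul_ne_zero two_ne_zero hwn
  have hP := ascPochhammer_eval_ne_zero_of_re_pos hw1_re n
  have hfac : (n ! : ℂ) ≠ 0 := Nat.cast_ne_zero.2 n.factorial_ne_zero
  have hfac' : ((2 * n + 1)! : ℂ) ≠ 0 := Nat.cast_ne_zero.2 (2 * n + 1).factorial_ne_zero
  have hq : (-c ^ 2 * D ^ 2 / 4) ^ n = (-1) ^ n * c ^ (2 * n) * (D ^ 2) ^ n / 4 ^ n := by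
    rw [div_pow]; ring
  rw [hpow, hq, eq_div_of_mul_eq hwn hshift,
    eq_div_of_mul_eq (mul_ne_zero (pow_ne_zero _ (by norm_num)) hfac) ((mul_comm _ _).trans hhalf)]
  field_simp
  rw [hw]
  ring

theorem integral_sin_eq_oneF2_general (s : ℂ) (hs : s.re < 0) (α d : ℝ)
    (hd : 0 < d) :
    ∫ x in (0 : ℝ)..d, ((Real.sin (α * x) : ℝ) : ℂ) * (x : ℂ) ^ (-s - 1) =
      (α : ℂ) * (d : ℂ) ^ (1 - s) / (1 - s) *
        ∑' n : ℕ, poch ((1 - s) / 2) n /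
            (poch (3 / 2) n * poch (1 + (1 - s) / 2) n) *
          (-(α : ℂ) ^ 2 * (d : ℂ) ^ 2 / 4) ^ n / (n.factorial : ℂ) := by
  set a : ℕ → ℂ := fun n ↦ (-1) ^ n * (α : ℂ) ^ (2 * n + 1) / (2 * n + 1)!
  have hsin (x : ℝ) : HasSum (fun n ↦ a n * (x : ℂ) ^ (2 * n + 1)) (Real.sin (α * x)) := by
    convert Complex.hasSum_sin (α * x) using 1
    · funext n; simp only [a]; ring
    · push_cast; rfl
  have ha : Summable fun n ↦ ‖a n‖ * d ^ (2 * n + 1) := by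
    convert (Real.hasSum_sinh (|α| * d)).summable using 2 with n
    simp only [a, norm_div, norm_mul, norm_pow, norm_neg, norm_one, one_pow, one_mul,
      Complex.norm_real, Real.norm_eq_abs, RCLike.norm_natCast, mul_pow]
    ring
  have hint := hasSum_integral_mul_cpow_of_hasSum_pow (t := -s - 1) hd
    (by simpa using hs) (fun x _ ↦ hsin x) ha
  rw [← hint.tsum_eq, ← tsum_mul_left]
  refine tsum_congr fun n ↦ ?_
  rw [← sin_coeff_mul_cpow_eq_oneF2_term (by linarith) _ (Complex.ofReal_ne_zero.2 hd.ne')]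
  simp only [a]
  push_cast
  ring_nf

/-- For `Re s < 0`, `α > 0`, `d > 0`:
`∫_0^d sin(αx) x^{-s-1} dx = (α d^{1-s}/(1-s)) ₁F₂((1-s)/2; 3/2, 1+(1-s)/2; -α²d²/4)`. -/
theorem integral_sin_eq_oneF2 (s : ℂ) (hs : s.re < 0) (α d : ℝ)
    (hα : 0 < α) (hd : 0 < d) :
    ∫ x in (0 : ℝ)..d, ((Real.sin (α * x) : ℝ) : ℂ) * (x : ℂ) ^ (-s - 1) =
      (α : ℂ) * (d : ℂ) ^ (1 - s) / (1 - s) *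
        ∑' n : ℕ, poch ((1 - s) / 2) n /
            (poch (3 / 2) n * poch (1 + (1 - s) / 2) n) *
          (-(α : ℂ) ^ 2 * (d : ℂ) ^ 2 / 4) ^ n / (n.factorial : ℂ) :=
  integral_sin_eq_oneF2_general s hs α d hd
end

section
/- Let s ∈ ℂ with Re s < 0, let α > 0 and d > 0. Then ∫_0^d cos(αx) x^{-s-1} dx = -(d^{-s}/s) · ∑_{n=0}^∞ ((-s/2)_n / ((1/2)_n · (1 - s/2)_n)) · (-α²d²/4)^n / n!. -/
open Complex MeasureTheory
open scoped Nat

lemma poch_zero {z : ℂ} (hz : Gamma z ≠ 0) : poch z 0 = 1 := by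
  simp [poch, hz]

lemma poch_succ {z : ℂ} {n : ℕ} (h : z + n ≠ 0) : poch z (n + 1) = poch z n * (z + n) := by
  rw [poch, poch, Nat.cast_succ, ← add_assoc, Gamma_add_one _ h]
  ring

lemma mul_poch_add_one {z : ℂ} (n : ℕ) (hz : z ≠ 0) (hzn : z + n ≠ 0) :
    z * poch (z + 1) n = (z + n) * poch z n := by
  rw [poch, poch, add_right_comm, Gamma_add_one _ hzn, Gamma_add_one _ hz,
    mul_div_mul_comm, ← mul_assoc, mul_div_cancel₀ _ hz]

lemma poch_ne_zero_of_re_pos {z : ℂ} (hz : 0 < z.re) (n : ℕ) : poch z n ≠ 0 :=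
  div_ne_zero (Gamma_ne_zero_of_re_pos (by simp; positivity)) (Gamma_ne_zero_of_re_pos hz)

lemma poch_one_half_mul (n : ℕ) : poch (1 / 2) n * (4 ^ n * n !) = (2 * n)! := by
  induction n with
  | zero =>
    simpa using poch_zero (Gamma_ne_zero_of_re_pos (by norm_num : (0 : ℝ) < (1 / 2 : ℂ).re))
  | succ n ih =>
    have h : (1 / 2 : ℂ) + n ≠ 0 := by
      simpa using ofReal_ne_zero.mpr (by positivity : (1 / 2 : ℝ) + n ≠ 0)
    rw [poch_succ h, show 2 * (n + 1) = 2 * n + 1 + 1 by ring,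
      Nat.factorial_succ, Nat.factorial_succ, Nat.factorial_succ]
    push_cast
    linear_combination (2 * (2 * n + 1) * (n + 1) : ℂ) * ih

lemma neg_one_div_mul_oneF2_term {s : ℂ} (hs : s.re < 0) (w : ℂ) (n : ℕ) :
    -(1 / s) * (poch (-s / 2) n / (poch (1 / 2) n * poch (1 - s / 2) n) * (w / 4) ^ n / n !) =
      w ^ n / (2 * n)! / (2 * n - s) := by
  have hs0 : s ≠ 0 := by rintro rfl; simp at hs
  have hsn : (2 * n - s : ℂ) ≠ 0 := fun h => by
    have := congrArg re h; simp at this; linarith [n.cast_nonneg (α := ℝ)]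
  have hshift := mul_poch_add_one n (z := -s / 2) (by simpa using hs0)
    (fun h => hsn (by linear_combination (2 : ℂ) * h))
  rw [show -s / 2 + 1 = 1 - s / 2 by ring] at hshift
  have hB := poch_one_half_mul n
  have hB0 := poch_ne_zero_of_re_pos (z := 1 / 2) (by norm_num) n
  have hC0 := poch_ne_zero_of_re_pos (z := 1 - s / 2) (by simp; linarith) n
  generalize poch (-s / 2) n = A at *
  generalize poch (1 / 2) n = B at *
  generalize poch (1 - s / 2) n = C at *
  have hn : (n ! : ℂ) ≠ 0 := Nat.cast_ne_zero.mpr n.factorial_ne_zero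
  have h2n : ((2 * n)! : ℂ) ≠ 0 := Nat.cast_ne_zero.mpr (2 * n).factorial_ne_zero
  rw [div_pow]
  field_simp
  linear_combination (2 * w ^ n * (2 * n)! : ℂ) * hshift - (s * C * w ^ n) * hB

lemma hasSum_intervalIntegral_cos_mul {μ : Measure ℝ} [IsLocallyFiniteMeasure μ]
    {g : ℝ → ℂ} {a b : ℝ} (hg : IntervalIntegrable g μ a b) (α : ℂ) :
    HasSum
      (fun n : ℕ =>
        (-1) ^ n * α ^ (2 * n) / (2 * n)! * ∫ x in a..b, (x : ℂ) ^ (2 * n) * g x ∂μ)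
      (∫ x in a..b, cos (α * x) * g x ∂μ) := by
  have hsum := intervalIntegral.hasSum_integral_of_dominated_convergence
    (F := fun n x => (-1) ^ n * (α * x) ^ (2 * n) / (2 * n)! * g x)
    (fun n x => ‖α * x‖ ^ (2 * n) / (2 * n)! * ‖g x‖)
    (fun n => (Continuous.aestronglyMeasurable (by fun_prop)).mul hg.def'.aestronglyMeasurable)
    (fun n => ae_of_all _ fun x _ => by simp)
    (ae_of_all _ fun x _ => ((Real.hasSum_cosh ‖α * x‖).mul_right ‖g x‖).summable)
    (by
      simp_rw [fun x : ℝ => ((Real.hasSum_cosh ‖α * x‖).mul_right ‖g x‖).tsum_eq]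
      exact hg.norm.continuousOn_mul (by fun_prop))
    (ae_of_all _ fun x _ => (hasSum_cos (α * x)).mul_right (g x))
  refine hsum.congr_fun fun n => ?_
  rw [← intervalIntegral.integral_const_mul]
  congr 1 with x
  ring

lemma integral_pow_mul_cpow (n : ℕ) {r : ℂ} (hr : -1 < r.re) (b : ℝ) :
    ∫ x in (0 : ℝ)..b, (x : ℂ) ^ n * (x : ℂ) ^ r = (b : ℂ) ^ (n + r + 1) / (n + r + 1) := by
  have hnr : -1 < ((n : ℂ) + r).re := by simp; linarith [n.cast_nonneg (α := ℝ)]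
  have hnr1 : (n : ℂ) + r + 1 ≠ 0 := fun h => by
    have := congrArg re h; simp at this; linarith [n.cast_nonneg (α := ℝ)]
  calc ∫ x in (0 : ℝ)..b, (x : ℂ) ^ n * (x : ℂ) ^ r
      = ∫ x in (0 : ℝ)..b, (x : ℂ) ^ ((n : ℂ) + r) := by
        refine intervalIntegral.integral_congr_ae ?_
        filter_upwards [volume.ae_ne 0] with x hx _
        rw [cpow_add _ _ (ofReal_ne_zero.mpr hx), cpow_natCast]
    _ = (b : ℂ) ^ (n + r + 1) / (n + r + 1) := by
        rw [integral_cpow (Or.inl hnr), ofReal_zero, zero_cpow hnr1, sub_zero]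

theorem integral_cos_eq_oneF2_general (s : ℂ) (hs : s.re < 0) (α d : ℝ)
    (hd : 0 < d) :
    ∫ x in (0 : ℝ)..d, ((Real.cos (α * x) : ℝ) : ℂ) * (x : ℂ) ^ (-s - 1) =
      -((d : ℂ) ^ (-s) / s) *
        ∑' n : ℕ, poch (-s / 2) n / (poch (1 / 2) n * poch (1 - s / 2) n) *
          (-(α : ℂ) ^ 2 * (d : ℂ) ^ 2 / 4) ^ n / (n.factorial : ℂ) := by
  have hr : -1 < (-s - 1).re := by simp; linarith
  have hcos := hasSum_intervalIntegral_cos_mul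
    (intervalIntegral.intervalIntegrable_cpow' (a := 0) (b := d) hr) α
  push_cast
  rw [← hcos.tsum_eq, ← tsum_mul_left]
  refine tsum_congr fun n => ?_
  have hterm := neg_one_div_mul_oneF2_term hs (-(α : ℂ) ^ 2 * d ^ 2) n
  rw [integral_pow_mul_cpow _ hr,
    show ((2 * n : ℕ) : ℂ) + (-s - 1) + 1 = (2 * n : ℕ) + -s by ring,
    cpow_add _ _ (ofReal_ne_zero.mpr hd.ne'), cpow_natCast]
  push_cast at hterm ⊢
  linear_combination (-(d : ℂ) ^ (-s)) * hterm

/-- For `Re s < 0`, `α > 0`, `d > 0`: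
`∫_0^d cos(αx) x^{-s-1} dx = -(d^{-s}/s) ₁F₂(-s/2; 1/2, 1-s/2; -α²d²/4)`. -/
theorem integral_cos_eq_oneF2 (s : ℂ) (hs : s.re < 0) (α d : ℝ)
    (hα : 0 < α) (hd : 0 < d) :
    ∫ x in (0 : ℝ)..d, ((Real.cos (α * x) : ℝ) : ℂ) * (x : ℂ) ^ (-s - 1) =
      -((d : ℂ) ^ (-s) / s) *
        ∑' n : ℕ, poch (-s / 2) n / (poch (1 / 2) n * poch (1 - s / 2) n) *
          (-(α : ℂ) ^ 2 * (d : ℂ) ^ 2 / 4) ^ n / (n.factorial : ℂ) :=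
  integral_cos_eq_oneF2_general s hs α d hd
end

section
/- For every z ∈ ℂ with Im z ≠ 0, log(4 sin²(πz)) = 2πi(1/2 - {sgn(Im z)·Re z + i|Im z|}) + 2 log(1 - e^{2πi sgn(Im z) z}), where log is the principal branch, sgn is the sign function, and {w} := 1/2 + (i/(2π)) log e^{-2πi(w - 1/2)} is the complex fractional part. -/
/-- Complex fractional part `{w} := 1/2 + (i/(2π)) Log e^{-2πi(w-1/2)}`. -/
noncomputable def cfract (w : ℂ) : ℂ :=
  1 / 2 + Complex.I / (2 * Real.pi) *
    Complex.log (Complex.exp (-(2 * (Real.pi : ℂ) * Complex.I) * (w - 1 / 2)))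

/-!
With `q = e^{2πiz}` one has `4 sin²(πz) = -q⁻¹ (1 - q)²`, and unwinding the definition of the
complex fractional part gives `2πi (1/2 - {z}) = log (-q⁻¹)`. For `Im z > 0` we have `|q| < 1`, so
`1 - q` lies in the right half-plane, and `Im (-q⁻¹)`, `Im (1 - q)` have opposite signs; hence the
arguments of `-q⁻¹` and `(1 - q)²` add up without leaving `(-π, π]` and the logarithm of the product
splits. The case `Im z < 0` follows by applying this to `-z`.
-/

open Complex
open scoped Real

namespace Complex

theorem log_mul_sq_of_arg_mul_arg_nonpos {a w : ℂ} (ha : a ≠ 0) (hw : 0 < w.re)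
    (h : a.arg * w.arg ≤ 0) : log (a * w ^ 2) = log a + 2 * log w := by
  have hw0 : w ≠ 0 := fun h0 ↦ by simp [h0] at hw
  obtain ⟨hw₁, hw₂⟩ := abs_lt.1 (abs_arg_lt_pi_div_two_iff.2 (Or.inl hw))
  have hsq : log (w ^ 2) = 2 * log w := by
    rw [sq, log_mul hw0 hw0, two_mul]
    constructor <;> linarith [Real.pi_pos]
  have harg : (w ^ 2).arg = 2 * w.arg := by
    simpa [log_im] using congrArg im hsq
  rw [log_mul ha (pow_ne_zero 2 hw0) ?_, hsq]
  rw [harg]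
  have ha₁ := neg_pi_lt_arg a
  have ha₂ := arg_le_pi a
  rcases lt_trichotomy w.arg 0 with hneg | hzero | hpos
  · have : 0 ≤ a.arg := by nlinarith
    constructor <;> linarith
  · rw [hzero]
    constructor <;> linarith
  · have : a.arg ≤ 0 := by nlinarith
    constructor <;> linarith

theorem log_neg_inv_mul_one_sub_sq {q : ℂ} (hq0 : q ≠ 0) (hq : q.re < 1) :
    log (-q⁻¹ * (1 - q) ^ 2) = log (-q⁻¹) + 2 * log (1 - q) := by
  have hre : 0 < (1 - q).re := by simpa using hq
  refine log_mul_sq_of_arg_mul_arg_nonpos (by simpa using hq0) hre ?_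
  have him : (-q⁻¹).im = q.im / normSq q := by simp [inv_im, neg_div]
  have hnorm : 0 < normSq q := normSq_pos.2 hq0
  rcases lt_trichotomy q.im 0 with hneg | hzero | hpos
  · refine mul_nonpos_of_nonpos_of_nonneg (arg_neg_iff.2 ?_).le (arg_nonneg_iff.2 ?_)
    · rw [him]; exact div_neg_of_neg_of_pos hneg hnorm
    · simp [hneg.le]
  · rw [arg_eq_zero_iff.2 ⟨hre.le, by simp [hzero]⟩, mul_zero]
  · refine mul_nonpos_of_nonneg_of_nonpos (arg_nonneg_iff.2 ?_) (arg_neg_iff.2 ?_).le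
    · rw [him]; exact (div_pos hpos hnorm).le
    · simpa using hpos

theorem four_mul_sin_sq (z : ℂ) :
    4 * sin z ^ 2 = -(exp (2 * z * I))⁻¹ * (1 - exp (2 * z * I)) ^ 2 := by
  set q := exp (2 * z * I)
  have hcos : 2 * cos (2 * z) = q + q⁻¹ := by rw [two_cos, ← exp_neg, neg_mul]
  have hq : q * q⁻¹ = 1 := mul_inv_cancel₀ (exp_ne_zero _)
  rw [sin_sq, cos_sq]
  linear_combination (-1 : ℂ) * hcos + (q - 2) * hq

end Complex

theorem two_pi_I_mul_one_half_sub_cfract (w : ℂ) :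
    2 * π * I * (1 / 2 - cfract w) = log (-(exp (2 * π * I * w))⁻¹) := by
  have hexp : exp (-(2 * π * I) * (w - 1 / 2)) = -(exp (2 * π * I * w))⁻¹ := by
    rw [show -(2 * π * I) * (w - 1 / 2) = π * I - 2 * π * I * w by ring, exp_sub,
      exp_pi_mul_I, neg_div, one_div]
  have hπ : (π : ℂ) ≠ 0 := ofReal_ne_zero.2 Real.pi_ne_zero
  rw [cfract, hexp]
  set L := log (-(exp (2 * π * I * w))⁻¹)
  field_simp
  linear_combination (-L) * I_sq

theorem log_four_mul_sin_sq_of_im_pos {z : ℂ} (hz : 0 < z.im) :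
    log (4 * sin (π * z) ^ 2) =
      2 * π * I * (1 / 2 - cfract z) + 2 * log (1 - exp (2 * π * I * z)) := by
  have hq : ‖exp (2 * π * I * z)‖ < 1 := by
    rw [norm_exp, Real.exp_lt_one_iff]
    simpa using mul_pos Real.two_pi_pos hz
  rw [four_mul_sin_sq, show 2 * (π * z) * I = 2 * π * I * z by ring,
    log_neg_inv_mul_one_sub_sq (exp_ne_zero _) ((re_le_norm _).trans_lt hq),
    two_pi_I_mul_one_half_sub_cfract]

/-- Factorization of the log-sine: for `Im z ≠ 0`,
`log(4 sin²(πz)) = 2πi(1/2 - {sgn(Im z) Re z + i |Im z|}) + 2 log(1 - e^{2πi sgn(Im z) z})`. -/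
theorem logsin_factorization (z : ℂ) (hz : z.im ≠ 0) :
    Complex.log (4 * Complex.sin ((Real.pi : ℂ) * z) ^ 2) =
      2 * (Real.pi : ℂ) * Complex.I *
          (1 / 2 - cfract ((Real.sign z.im : ℝ) * z.re + Complex.I * (|z.im| : ℝ))) +
        2 * Complex.log
          (1 - Complex.exp (2 * (Real.pi : ℂ) * Complex.I * (Real.sign z.im : ℝ) * z)) := by
  rcases hz.lt_or_gt with hneg | hpos
  · have h := log_four_mul_sin_sq_of_im_pos (z := -z) (by simpa using hneg)
    rw [mul_neg, sin_neg, neg_sq] at h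
    rw [Real.sign_of_neg hneg, abs_of_neg hneg, h]
    congr 4 <;> apply Complex.ext <;> simp
  · rw [Real.sign_of_pos hpos, abs_of_pos hpos, log_four_mul_sin_sq_of_im_pos hpos]
    congr 4 <;> apply Complex.ext <;> simp
end

section
/- For every s ∈ ℂ with Re s < 0 and every d > 0, ∫_0^d log(1 - x/d) x^{-s-1} dx = (ψ(1-s) + γ)/(s d^s), where ψ is the digamma function and γ the Euler–Mascheroni constant. -/
set_option maxHeartbeats 2000000

open MeasureTheory Metric Set intervalIntegral

noncomputable def digamma (z : ℂ) : ℂ := deriv Complex.Gamma z / Complex.Gamma z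

lemma neg_log_le (u : ℝ) (hu0 : 0 < u) (hu1 : u ≤ 1) :
    |Real.log u| ≤ 4 * u ^ (-(4⁻¹) : ℝ) := by
  have h := Real.log_le_sub_one_of_pos (Real.rpow_pos_of_pos hu0 (-(4⁻¹)))
  rw [Real.log_rpow hu0] at h
  rw [abs_of_nonpos (Real.log_nonpos hu0.le hu1)]
  nlinarith [Real.rpow_pos_of_pos hu0 (-(4⁻¹) : ℝ)]

lemma key (s : ℂ) (hs : s.re < 0) :
    ∫ t in (0:ℝ)..1, ((Real.log (1 - t) : ℝ) : ℂ) * (t : ℂ) ^ (-s - 1) =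
      (digamma (1 - s) + (Real.eulerMascheroniConstant : ℂ)) / s := by
  have hsre : 0 < (-s).re := by simpa using hs
  have hs0 : s ≠ 0 := fun h => by simp [h] at hs
  have hns0 : (-s) ≠ 0 := neg_ne_zero.mpr hs0
  have h1s : (0:ℝ) < (1 - s).re := by simp [Complex.sub_re]; linarith
  have hG1s : Complex.Gamma (1 - s) ≠ 0 := Complex.Gamma_ne_zero_of_re_pos h1s
  have hGns : Complex.Gamma (-s) ≠ 0 := Complex.Gamma_ne_zero_of_re_pos hsre
  set μ : Measure ℝ := volume.restrict (Ioo (0:ℝ) 1) with hμ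
  set F : ℂ → ℝ → ℂ := fun w t => (t : ℂ) ^ (-s - 1) * (1 - (t:ℂ)) ^ w with hF
  set F' : ℂ → ℝ → ℂ :=
    fun w t => (t : ℂ) ^ (-s - 1) * ((1 - (t:ℂ)) ^ w * Complex.log (1 - (t:ℂ))) with hF'
  -- integrability of beta-type integrands over Ioo
  have hbeta : ∀ w : ℂ, 0 < (w+1).re →
      IntegrableOn (fun t : ℝ => (t : ℂ) ^ (-s - 1) * (1 - (t:ℂ)) ^ w) (Ioo (0:ℝ) 1) := by
    intro w hw
    have := Complex.betaIntegral_convergent hsre hw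
    rw [intervalIntegrable_iff_integrableOn_Ioc_of_le zero_le_one] at this
    have := this.mono_set Ioo_subset_Ioc_self
    simpa using this
  have haeIoo : ∀ᵐ t ∂μ, t ∈ Ioo (0:ℝ) 1 := ae_restrict_mem measurableSet_Ioo
  -- dominated differentiation
  have hF_meas : ∀ᶠ w in nhds (0:ℂ), AEStronglyMeasurable (F w) μ := by
    filter_upwards [ball_mem_nhds (0:ℂ) one_half_pos] with w hw
    have hwre : 0 < (w+1).re := by
      have := (Complex.abs_re_le_norm w).trans_lt (mem_ball_zero_iff.mp hw)
      have := abs_lt.mp this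
      simp [Complex.add_re]; linarith [this.1]
    exact (hbeta w hwre).aestronglyMeasurable
  have hF_int : Integrable (F 0) μ := by
    have := hbeta 0 (by norm_num)
    exact this
  have hF'_meas : AEStronglyMeasurable (F' 0) μ := by
    apply ContinuousOn.aestronglyMeasurable _ measurableSet_Ioo
    intro t ht
    apply ContinuousAt.continuousWithinAt
    have h1t : (1 - (t:ℂ)) ≠ 0 := by
      intro h
      have : (t:ℂ) = 1 := by linear_combination -h
      exact_mod_cast absurd this (by exact_mod_cast ht.2.ne)
    have c1 : ContinuousAt (fun x : ℝ => (x:ℂ) ^ (-s-1)) t :=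
      Complex.continuousAt_ofReal_cpow_const t _ (Or.inr ht.1.ne')
    have c2 : ContinuousAt (fun x : ℝ => (1 - (x:ℂ))) t := by fun_prop
    have c3 : ContinuousAt (fun x : ℝ => (1 - (x:ℂ)) ^ (0:ℂ)) t := by
      simp only [Complex.cpow_zero]; fun_prop
    have hmem : 1 - (t:ℂ) ∈ Complex.slitPlane := by
      simp only [Complex.mem_slitPlane_iff, Complex.sub_re, Complex.one_re, Complex.ofReal_re]
      left; linarith [ht.2]
    have c4 : ContinuousAt (fun x : ℝ => Complex.log (1 - (x:ℂ))) t :=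
      c2.clog hmem
    exact c1.mul (c3.mul c4)
  have h_bound : ∀ᵐ t ∂μ, ∀ w ∈ ball (0:ℂ) (1/2),
      ‖F' w t‖ ≤ 4 * ‖(t : ℂ) ^ (-s - 1) * (1 - (t:ℂ)) ^ ((4⁻¹ : ℂ) - 1)‖ := by
    filter_upwards [haeIoo] with t ht w hw
    have h1t : (0:ℝ) < 1 - t := by linarith [ht.2]
    have hcast : (1 - (t:ℂ)) = ((1 - t : ℝ) : ℂ) := by push_cast; ring
    simp only [hF']
    rw [hcast, ← Complex.ofReal_log h1t.le, norm_mul, norm_mul, norm_mul]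
    simp only [Complex.norm_cpow_eq_rpow_re_of_pos ht.1,
      Complex.norm_cpow_eq_rpow_re_of_pos h1t, Complex.norm_real, Real.norm_eq_abs]
    have hwre : -(2⁻¹ : ℝ) ≤ w.re := by
      have := (Complex.abs_re_le_norm w).trans_lt (mem_ball_zero_iff.mp hw)
      have := abs_lt.mp this
      linarith [this.1]
    have hB : (1-t) ^ w.re ≤ (1-t) ^ (-(2⁻¹):ℝ) :=
      Real.rpow_le_rpow_of_exponent_ge h1t (by linarith [ht.1]) hwre
    have hC : |Real.log (1-t)| ≤ 4 * (1-t) ^ (-(4⁻¹) : ℝ) :=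
      neg_log_le _ h1t (by linarith [ht.1])
    have hBC : (1-t) ^ w.re * |Real.log (1-t)|
        ≤ (1-t) ^ (-(2⁻¹):ℝ) * (4 * (1-t) ^ (-(4⁻¹) : ℝ)) :=
      mul_le_mul hB hC (abs_nonneg _) (Real.rpow_nonneg h1t.le _)
    have hcomb : (1-t) ^ (-(2⁻¹):ℝ) * (4 * (1-t) ^ (-(4⁻¹) : ℝ))
        = 4 * (1-t) ^ (((4⁻¹:ℂ) - 1).re) := by
      rw [mul_comm ((1-t) ^ (-(2⁻¹):ℝ)), mul_assoc, ← Real.rpow_add h1t]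
      norm_num
    have hA : (0:ℝ) ≤ t ^ ((-s-1).re) := Real.rpow_nonneg ht.1.le _
    calc t ^ ((-s-1).re) * ((1-t) ^ w.re * |Real.log (1-t)|)
        ≤ t ^ ((-s-1).re) * (4 * (1-t) ^ (((4⁻¹:ℂ) - 1).re)) := by
          apply mul_le_mul_of_nonneg_left (hBC.trans_eq hcomb) hA
      _ = 4 * (t ^ ((-s-1).re) * (1-t) ^ (((4⁻¹:ℂ) - 1).re)) := by ring
  have bound_int : Integrable
      (fun t : ℝ => 4 * ‖(t : ℂ) ^ (-s - 1) * (1 - (t:ℂ)) ^ ((4⁻¹ : ℂ) - 1)‖) μ := by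
    have := Complex.betaIntegral_convergent hsre (show (0:ℝ) < (4⁻¹:ℂ).re by norm_num)
    rw [intervalIntegrable_iff_integrableOn_Ioc_of_le zero_le_one] at this
    have := (this.mono_set Ioo_subset_Ioc_self).norm.const_mul 4
    simpa using this
  have h_diff : ∀ᵐ t ∂μ, ∀ w ∈ ball (0:ℂ) (1/2), HasDerivAt (F · t) (F' w t) w := by
    filter_upwards [haeIoo] with t ht w _
    have h1t : (1 - (t:ℂ)) ≠ 0 := by
      intro h
      have : (t:ℂ) = 1 := by linear_combination -h
      exact_mod_cast absurd this (by exact_mod_cast ht.2.ne)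
    exact ((Complex.hasStrictDerivAt_const_cpow (Or.inl h1t)).hasDerivAt).const_mul _
  clear_value F F' μ
  obtain ⟨-, hderiv⟩ := hasDerivAt_integral_of_dominated_loc_of_deriv_le (μ := μ) (F := F)
    (F' := F') (x₀ := (0:ℂ))
    (bound := fun t : ℝ => 4 * ‖(t : ℂ) ^ (-s - 1) * (1 - (t:ℂ)) ^ ((4⁻¹ : ℂ) - 1)‖)
    (ball_mem_nhds (0:ℂ) one_half_pos) hF_meas hF_int hF'_meas h_bound bound_int h_diff
  -- identify ∫ F w with Gamma quotient near 0
  set G : ℂ → ℂ :=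
    fun w => Complex.Gamma (-s) * Complex.Gamma (w+1) / Complex.Gamma (w+1-s) with hGdef
  have hFeqG : ∀ w ∈ ball (0:ℂ) (1/2), (∫ t, F w t ∂μ) = G w := by
    intro w hw
    have h' := abs_lt.mp ((Complex.abs_re_le_norm w).trans_lt (mem_ball_zero_iff.mp hw))
    have hwre : 0 < (w+1).re := by
      rw [Complex.add_re, Complex.one_re]; linarith [h'.1]
    have hbi : Complex.betaIntegral (-s) (w+1) = ∫ t, F w t ∂μ := by
      rw [hμ, hF, Complex.betaIntegral, intervalIntegral.integral_of_le zero_le_one,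
        MeasureTheory.integral_Ioc_eq_integral_Ioo]
      simp [add_sub_cancel_right]
    have hGw : Complex.Gamma (-s + (w+1)) ≠ 0 := by
      apply Complex.Gamma_ne_zero_of_re_pos
      rw [Complex.add_re, Complex.neg_re, Complex.add_re, Complex.one_re]
      linarith [h'.1]
    have hmul := Complex.Gamma_mul_Gamma_eq_betaIntegral hsre hwre
    rw [hbi] at hmul
    simp only [hGdef]
    rw [show w + 1 - s = -s + (w+1) by ring, eq_div_iff hGw]
    linear_combination -hmul
  have hGderiv : HasDerivAt G
      ((Complex.Gamma (-s) * -(Real.eulerMascheroniConstant:ℂ) * Complex.Gamma (1-s)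
        - Complex.Gamma (-s) * Complex.Gamma 1 * deriv Complex.Gamma (1-s))
        / Complex.Gamma (1-s) ^ 2) 0 := by
    have hinner1 : HasDerivAt (fun w : ℂ => w + 1) 1 0 := by
      simpa using (hasDerivAt_id (0:ℂ)).add_const 1
    have hinner2 : HasDerivAt (fun w : ℂ => w + 1 - s) 1 0 := by
      simpa using ((hasDerivAt_id (0:ℂ)).add_const 1).sub_const s
    have hG1 : HasDerivAt Complex.Gamma (-(Real.eulerMascheroniConstant:ℂ))
        ((fun w : ℂ => w + 1) 0) := by
      simpa using Complex.hasDerivAt_Gamma_one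
    have hdiffΓ : DifferentiableAt ℂ Complex.Gamma (1-s) := by
      apply Complex.differentiableAt_Gamma
      intro m h
      have hre := congrArg Complex.re h
      simp only [Complex.sub_re, Complex.one_re, Complex.neg_re, Complex.natCast_re] at hre
      have hm : (0:ℝ) ≤ (m:ℝ) := m.cast_nonneg
      linarith
    have hG2 : HasDerivAt Complex.Gamma (deriv Complex.Gamma (1-s))
        ((fun w : ℂ => w + 1 - s) 0) := by
      simpa using hdiffΓ.hasDerivAt
    have h1 : HasDerivAt (fun w : ℂ => Complex.Gamma (w+1))
        (-(Real.eulerMascheroniConstant:ℂ)) 0 := by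
      simpa [Function.comp_def] using hG1.comp 0 hinner1
    have h2 : HasDerivAt (fun w : ℂ => Complex.Gamma (w+1-s))
        (deriv Complex.Gamma (1-s)) 0 := by
      simpa [Function.comp_def] using hG2.comp 0 hinner2
    have H := (h1.const_mul (Complex.Gamma (-s))).div h2 (by simpa using hG1s)
    simp only [hGdef]
    simpa [Pi.div_def] using H
  have hInt : HasDerivAt (fun w => ∫ t, F w t ∂μ)
      ((Complex.Gamma (-s) * -(Real.eulerMascheroniConstant:ℂ) * Complex.Gamma (1-s)
        - Complex.Gamma (-s) * Complex.Gamma 1 * deriv Complex.Gamma (1-s))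
        / Complex.Gamma (1-s) ^ 2) 0 := by
    apply hGderiv.congr_of_eventuallyEq
    filter_upwards [ball_mem_nhds (0:ℂ) one_half_pos] with w hw
    exact hFeqG w hw
  have huniq := hderiv.unique hInt
  -- identify the integral
  have hieq : (∫ t, F' 0 t ∂μ)
      = ∫ t in (0:ℝ)..1, ((Real.log (1 - t) : ℝ) : ℂ) * (t : ℂ) ^ (-s - 1) := by
    rw [hμ, intervalIntegral.integral_of_le zero_le_one,
      MeasureTheory.integral_Ioc_eq_integral_Ioo]
    apply setIntegral_congr_fun measurableSet_Ioo
    intro t ht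
    have h1t : (0:ℝ) < 1 - t := by linarith [ht.2]
    have hcast : (1 - (t:ℂ)) = ((1 - t : ℝ) : ℂ) := by push_cast; ring
    simp only [hF', Complex.cpow_zero, one_mul]
    rw [hcast, Complex.ofReal_log h1t.le, mul_comm]
  rw [← hieq, huniq]
  -- final algebra
  have hΓrec : Complex.Gamma (1-s) = -s * Complex.Gamma (-s) := by
    rw [show (1:ℂ) - s = -s + 1 by ring, Complex.Gamma_add_one _ hns0]
  have hdig : deriv Complex.Gamma (1-s) = digamma (1-s) * Complex.Gamma (1-s) := by
    rw [digamma]; field_simp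
  rw [hdig, hΓrec, Complex.Gamma_one]
  field_simp
  ring

/-- For `Re s < 0` and `d > 0`:
`∫_0^d log(1 - x/d) x^{-s-1} dx = (ψ(1-s) + γ)/(s d^s)`. -/
theorem integral_log_one_sub (s : ℂ) (hs : s.re < 0) (d : ℝ) (hd : 0 < d) :
    ∫ x in (0 : ℝ)..d, ((Real.log (1 - x / d) : ℝ) : ℂ) * (x : ℂ) ^ (-s - 1) =
      (digamma (1 - s) + (Real.eulerMascheroniConstant : ℂ)) / (s * (d : ℂ) ^ s) := by
  have hd0 : (d:ℝ) ≠ 0 := hd.ne'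
  have hdc : (d:ℂ) ≠ 0 := by exact_mod_cast hd0
  have hs0 : s ≠ 0 := fun h => by simp [h] at hs
  have hds : (d:ℂ) ^ s ≠ 0 := by simp [Complex.cpow_eq_zero_iff, hdc]
  have hsub : (d:ℝ) • (∫ t in (0:ℝ)..1,
        ((Real.log (1 - t*d/d) : ℝ) : ℂ) * ((t*d : ℝ) : ℂ) ^ (-s - 1))
      = ∫ x in (0:ℝ)..d, ((Real.log (1 - x / d) : ℝ) : ℂ) * (x : ℂ) ^ (-s - 1) := by
    have := intervalIntegral.smul_integral_comp_mul_right
      (f := fun x : ℝ => ((Real.log (1 - x / d) : ℝ) : ℂ) * (x : ℂ) ^ (-s - 1))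
      (a := 0) (b := 1) d
    simpa using this
  rw [← hsub]
  have hcongr : (∫ t in (0:ℝ)..1, ((Real.log (1 - t*d/d) : ℝ) : ℂ) * ((t*d:ℝ) : ℂ) ^ (-s - 1))
      = ∫ t in (0:ℝ)..1,
          (d:ℂ)^(-s-1) * (((Real.log (1 - t) : ℝ) : ℂ) * (t : ℂ) ^ (-s - 1)) := by
    apply intervalIntegral.integral_congr
    intro t ht
    rw [Set.uIcc_of_le zero_le_one] at ht
    dsimp only
    rw [mul_div_assoc, div_self hd0, mul_one, Complex.ofReal_mul, Complex.mul_cpow_ofReal_nonneg ht.1 hd.le]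
    ring
  rw [hcongr, intervalIntegral.integral_const_mul, key s hs, Complex.real_smul, ← mul_assoc]
  have hdd : ((d:ℝ):ℂ) * (d:ℂ)^(-s-1) = (d:ℂ)^(-s) := by
    have h := Complex.cpow_add 1 (-s-1) hdc
    rw [Complex.cpow_one, show (1:ℂ) + (-s-1) = -s by ring] at h
    exact h.symm
  rw [hdd, Complex.cpow_neg]
  field_simp
end

section
/- For every s ∈ ℂ with Re s > 0 and d > 0, ∫_d^∞ log(x/d - 1) x^{-s-1} dx = d^{-s}/s² - (ψ(1+s) + γ)/(s d^s), where ψ is the digamma function and γ the Euler–Mascheroni constant. -/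
/-!
Substituting `x = d / v` turns the integral into
`d^{-s} ∫₀¹ (log (1 - v) - log v) v^{s-1} dv`. Both pieces are derivatives of the Beta function
in its first argument: differentiating `B(u, v) = Γ(u)Γ(v)/Γ(u+v)` gives
`∫₀¹ log t · t^{u-1} (1-t)^{v-1} dt = B(u, v) (ψ(u) - ψ(u+v))`,
which at `(u, v) = (s, 1)` is `-1/s²`, and at `(u, v) = (1, s)`, after reflecting `t ↦ 1 - t`,
is `-(ψ(1+s) + γ)/s`.
-/

open MeasureTheory Set Filter Asymptotics
open scoped Topology

lemma Set.image_const_div_Ioo_zero_one {d : ℝ} (hd : 0 < d) : (d / ·) '' Ioo 0 1 = Ioi d := by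
  ext x
  constructor
  · rintro ⟨v, ⟨hv0, hv1⟩, rfl⟩
    exact (lt_div_iff₀ hv0).mpr (by nlinarith)
  · intro (hx : d < x)
    have hx0 : 0 < x := hd.trans hx
    exact ⟨d / x, ⟨by positivity, (div_lt_one hx0).mpr hx⟩, by field_simp⟩

namespace MeasureTheory

variable {E : Type*} [NormedAddCommGroup E]

lemma integral_Ioi_eq_integral_Ioo_const_div [NormedSpace ℝ E] {d : ℝ} (hd : 0 < d)
    (f : ℝ → E) :
    ∫ x in Ioi d, f x = ∫ v in Ioo 0 1, (d / v ^ 2) • f (d / v) := by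
  rw [← image_const_div_Ioo_zero_one hd, integral_image_eq_integral_abs_deriv_smul
    measurableSet_Ioo (f := (d / ·)) (f' := fun v => d * -(v ^ 2)⁻¹)
    (fun v hv => by
      simpa only [div_eq_mul_inv] using ((hasDerivAt_inv hv.1.ne').const_mul d).hasDerivWithinAt)
    (fun v _ w _ h => by simpa [div_eq_mul_inv, hd.ne'] using h)]
  refine setIntegral_congr_fun measurableSet_Ioo fun v hv => ?_
  rw [abs_mul, abs_neg, abs_of_pos hd, abs_of_pos (by have := hv.1; positivity), ← div_eq_mul_inv]

lemma IntegrableOn.comp_one_sub_Ioo_zero_one {g : ℝ → E} (hg : IntegrableOn g (Ioo 0 1)) :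
    IntegrableOn (fun t => g (1 - t)) (Ioo 0 1) := by
  have h := (Measure.measurePreserving_sub_left volume (1 : ℝ)).integrableOn_comp_preimage
    (measurableEmbedding_subLeft 1) (f := g) (s := Ioo 0 1)
  rw [preimage_const_sub_Ioo, sub_self, sub_zero] at h
  exact h.mpr hg

lemma integral_Ioo_zero_one_comp_one_sub [NormedSpace ℝ E] (g : ℝ → E) :
    ∫ t in Ioo (0 : ℝ) 1, g (1 - t) = ∫ t in Ioo (0 : ℝ) 1, g t := by
  have h := (Measure.measurePreserving_sub_left volume (1 : ℝ)).setIntegral_preimage_emb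
    (measurableEmbedding_subLeft 1) g (Ioo 0 1)
  rwa [preimage_const_sub_Ioo, sub_self, sub_zero] at h

end MeasureTheory

namespace Complex

section IndicatorIoo

variable {E : Type*} [NormedAddCommGroup E] [NormedSpace ℂ E] (g : ℝ → E) (s : ℂ)

lemma mellin_indicator_Ioo_zero_one :
    mellin ((Ioo 0 1).indicator g) s = ∫ t in Ioo (0 : ℝ) 1, (t : ℂ) ^ (s - 1) • g t := by
  rw [mellin, ← indicator_smul, setIntegral_indicator measurableSet_Ioo,
    inter_eq_right.mpr Ioo_subset_Ioi_self]

lemma mellinConvergent_indicator_Ioo_zero_one_iff :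
    MellinConvergent ((Ioo 0 1).indicator g) s ↔
      IntegrableOn (fun t : ℝ => (t : ℂ) ^ (s - 1) • g t) (Ioo 0 1) := by
  rw [MellinConvergent, ← indicator_smul, integrableOn_indicator_iff measurableSet_Ioo,
    inter_eq_left.mpr Ioo_subset_Ioi_self]

end IndicatorIoo

lemma betaIntegral_eq_mellin (u v : ℂ) :
    betaIntegral u v = mellin ((Ioo 0 1).indicator fun t : ℝ => (1 - (t : ℂ)) ^ (v - 1)) u := by
  rw [mellin_indicator_Ioo_zero_one, betaIntegral, intervalIntegral.integral_of_le zero_le_one,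
    integral_Ioc_eq_integral_Ioo]
  rfl

lemma hasDerivAt_betaIntegral_left_integral {u v : ℂ} (hu : 0 < u.re) (hv : 0 < v.re) :
    IntegrableOn (fun t : ℝ => Real.log t * ((t : ℂ) ^ (u - 1) * (1 - t) ^ (v - 1)))
        (Ioo 0 1) ∧
      HasDerivAt (betaIntegral · v)
        (∫ t in Ioo 0 1, Real.log t * ((t : ℂ) ^ (u - 1) * (1 - t) ^ (v - 1))) u := by
  set f : ℝ → ℂ := (Ioo 0 1).indicator fun t : ℝ => (1 - (t : ℂ)) ^ (v - 1)
  have hf_int : Integrable f := by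
    refine IntegrableOn.integrable_indicator ?_ measurableSet_Ioo
    have h := (betaIntegral_convergent (u := 1) one_pos hv).1
    rw [integrableOn_Ioc_iff_integrableOn_Ioo] at h
    simpa using h
  have hf_top : f =O[atTop] (· ^ (-(u.re + 1))) := by
    refine EventuallyEq.trans_isBigO ?_ (isBigO_zero _ _)
    filter_upwards [eventually_ge_atTop 1] with t ht
    exact indicator_of_notMem (fun h => ht.not_gt h.2) _
  have hf_bot : f =O[𝓝[>] 0] (· ^ (-(0 : ℝ))) := by
    have hcont : ContinuousAt (fun t : ℝ => (1 - (t : ℂ)) ^ (v - 1)) 0 :=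
      (continuousAt_const.sub continuous_ofReal.continuousAt).cpow continuousAt_const (by simp)
    have hbdd : (fun t : ℝ => (1 - (t : ℂ)) ^ (v - 1)) =O[𝓝[>] 0] fun _ => (1 : ℝ) :=
      (hcont.tendsto.mono_left nhdsWithin_le_nhds).isBigO_one ℝ
    have hev : f =ᶠ[𝓝[>] 0] fun t : ℝ => (1 - (t : ℂ)) ^ (v - 1) := by
      filter_upwards [Ioo_mem_nhdsGT zero_lt_one] with t ht using indicator_of_mem ht _
    simpa using hev.trans_isBigO hbdd
  obtain ⟨hconv, hderiv⟩ := mellin_hasDerivAt_of_isBigO_rpow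
    (hf_int.locallyIntegrable.locallyIntegrableOn _) hf_top (by linarith) hf_bot hu
  have hlog : (fun t : ℝ => Real.log t • f t) =
      (Ioo 0 1).indicator fun t : ℝ => Real.log t • (1 - (t : ℂ)) ^ (v - 1) :=
    (indicator_smul _ _ _).symm
  have hintegrand (t : ℝ) : (t : ℂ) ^ (u - 1) • Real.log t • (1 - (t : ℂ)) ^ (v - 1) =
      Real.log t * ((t : ℂ) ^ (u - 1) * (1 - t) ^ (v - 1)) := by
    rw [real_smul, smul_eq_mul]; ring
  rw [hlog, mellinConvergent_indicator_Ioo_zero_one_iff] at hconv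
  rw [hlog, mellin_indicator_Ioo_zero_one] at hderiv
  simp only [hintegrand] at hconv hderiv
  refine ⟨hconv, ?_⟩
  rwa [show (betaIntegral · v) = mellin f from funext fun w => betaIntegral_eq_mellin w v]

lemma ne_neg_natCast_of_re_pos {s : ℂ} (hs : 0 < s.re) (m : ℕ) : s ≠ -m := fun h => by
  have := congrArg re h
  simp only [neg_re, natCast_re] at this
  linarith [m.cast_nonneg (α := ℝ)]

lemma hasDerivAt_betaIntegral_left {u v : ℂ} (hu : 0 < u.re) (hv : 0 < v.re) :
    HasDerivAt (betaIntegral · v) (betaIntegral u v * (digamma u - digamma (u + v))) u := by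
  have huv : 0 < (u + v).re := by simp only [add_re]; linarith
  have hΓ : HasDerivAt (fun w => Gamma w * Gamma v / Gamma (w + v))
      ((deriv Gamma u * Gamma v * Gamma (u + v) - Gamma u * Gamma v * deriv Gamma (u + v)) /
        Gamma (u + v) ^ 2) u :=
    ((differentiableAt_Gamma u (ne_neg_natCast_of_re_pos hu)).hasDerivAt.mul_const _).div
      ((differentiableAt_Gamma _ (ne_neg_natCast_of_re_pos huv)).hasDerivAt.comp_add_const u v)
      (Gamma_ne_zero_of_re_pos huv)
  have hev : (betaIntegral · v) =ᶠ[𝓝 u] fun w => Gamma w * Gamma v / Gamma (w + v) := by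
    filter_upwards [(isOpen_lt continuous_const continuous_re).mem_nhds hu] with w hw
    exact betaIntegral_eq_Gamma_mul_div w v hw hv
  refine (hΓ.congr_of_eventuallyEq hev).congr_deriv ?_
  rw [betaIntegral_eq_Gamma_mul_div u v hu hv, digamma_def, logDeriv_apply, logDeriv_apply]
  field_simp [Gamma_ne_zero_of_re_pos hu, Gamma_ne_zero_of_re_pos huv]

theorem integral_log_mul_betaIntegrand {u v : ℂ} (hu : 0 < u.re) (hv : 0 < v.re) :
    ∫ t in Ioo (0 : ℝ) 1, Real.log t * ((t : ℂ) ^ (u - 1) * (1 - t) ^ (v - 1)) =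
      betaIntegral u v * (digamma u - digamma (u + v)) :=
  (hasDerivAt_betaIntegral_left_integral hu hv).2.unique (hasDerivAt_betaIntegral_left hu hv)

theorem integral_log_mul_cpow_sub_one {s : ℂ} (hs : 0 < s.re) :
    IntegrableOn (fun t : ℝ => Real.log t * (t : ℂ) ^ (s - 1)) (Ioo 0 1) ∧
      ∫ t in Ioo (0 : ℝ) 1, Real.log t * (t : ℂ) ^ (s - 1) = -1 / s ^ 2 := by
  have h1 : 0 < (1 : ℂ).re := by simp
  have hint := (hasDerivAt_betaIntegral_left_integral hs h1).1
  have hval := integral_log_mul_betaIntegrand hs h1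
  simp only [sub_self, cpow_zero, mul_one] at hint hval
  refine ⟨hint, ?_⟩
  rw [hval, betaIntegral_eval_one_right hs, digamma_apply_add_one s (ne_neg_natCast_of_re_pos hs)]
  field_simp
  ring

theorem integral_log_one_sub_mul_cpow_sub_one {s : ℂ} (hs : 0 < s.re) :
    IntegrableOn (fun t : ℝ => Real.log (1 - t) * (t : ℂ) ^ (s - 1)) (Ioo 0 1) ∧
      ∫ t in Ioo (0 : ℝ) 1, Real.log (1 - t) * (t : ℂ) ^ (s - 1) =
        -(digamma (1 + s) + Real.eulerMascheroniConstant) / s := by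
  have h1 : 0 < (1 : ℂ).re := by simp
  have hint := (hasDerivAt_betaIntegral_left_integral h1 hs).1
  have hval := integral_log_mul_betaIntegrand h1 hs
  simp only [sub_self, cpow_zero, one_mul] at hint hval
  have hreflect : (fun t : ℝ => Real.log (1 - t) * (t : ℂ) ^ (s - 1)) =
      fun t => Real.log (1 - t) * (1 - ((1 - t : ℝ) : ℂ)) ^ (s - 1) := by
    funext t; push_cast; ring_nf
  rw [hreflect]
  refine ⟨hint.comp_one_sub_Ioo_zero_one, ?_⟩
  rw [integral_Ioo_zero_one_comp_one_sub
      (fun t : ℝ => (Real.log t : ℂ) * (1 - (t : ℂ)) ^ (s - 1)),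
    hval, betaIntegral_symm, betaIntegral_eval_one_right hs, digamma_one]
  ring

end Complex

lemma const_div_sq_smul_log_div_sub_one_mul_cpow {d v : ℝ} (hd : 0 < d) (hv : v ∈ Ioo 0 1)
    (s : ℂ) :
    (d / v ^ 2) • (((Real.log (d / v / d - 1) : ℝ) : ℂ) * ((d / v : ℝ) : ℂ) ^ (-s - 1)) =
      (d : ℂ) ^ (-s) *
        (Real.log (1 - v) * (v : ℂ) ^ (s - 1) - Real.log v * (v : ℂ) ^ (s - 1)) := by
  obtain ⟨hv0, hv1⟩ := hv
  have hd0 : (d : ℂ) ≠ 0 := by exact_mod_cast hd.ne'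
  have hv0' : (v : ℂ) ≠ 0 := by exact_mod_cast hv0.ne'
  have hvs : (v : ℂ) ^ s ≠ 0 := by simp [Complex.cpow_eq_zero_iff, hv0']
  have hlog : Real.log (d / v / d - 1) = Real.log (1 - v) - Real.log v := by
    rw [← Real.log_div (by linarith) hv0.ne']
    congr 1
    field_simp
  rw [hlog, Complex.ofReal_div, Complex.div_cpow_ofReal_nonneg hd.le hv0.le, Complex.real_smul,
    Complex.cpow_sub _ _ hd0, Complex.cpow_sub _ _ hv0', Complex.cpow_sub _ _ hv0',
    Complex.cpow_neg, Complex.cpow_neg, Complex.cpow_one, Complex.cpow_one]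
  push_cast
  field_simp

/-- For `Re s > 0` and `d > 0`:
`∫_d^∞ log(x/d - 1) x^{-s-1} dx = d^{-s}/s² - (ψ(1+s) + γ)/(s d^s)`. -/
theorem integral_log_div_sub_one (s : ℂ) (hs : 0 < s.re) (d : ℝ) (hd : 0 < d) :
    ∫ x in Set.Ioi d, ((Real.log (x / d - 1) : ℝ) : ℂ) * (x : ℂ) ^ (-s - 1) =
      (d : ℂ) ^ (-s) / s ^ 2 -
        (digamma (1 + s) + (Real.eulerMascheroniConstant : ℂ)) / (s * (d : ℂ) ^ s) := by
  obtain ⟨hint₁, hval₁⟩ := Complex.integral_log_one_sub_mul_cpow_sub_one hs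
  obtain ⟨hint₀, hval₀⟩ := Complex.integral_log_mul_cpow_sub_one hs
  have hds : (d : ℂ) ^ s ≠ 0 := by simp [Complex.cpow_eq_zero_iff, hd.ne']
  rw [integral_Ioi_eq_integral_Ioo_const_div hd, setIntegral_congr_fun measurableSet_Ioo
      fun v hv => const_div_sq_smul_log_div_sub_one_mul_cpow hd hv s,
    integral_const_mul, integral_sub hint₁ hint₀, hval₁, hval₀, Complex.cpow_neg]
  change _ = _ - (Complex.digamma (1 + s) + _) / _
  field_simp
  ring
end
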